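/- arXiv:2108.03811 — 2 statements merged into one kernel-verified Lean document; each statement's English description precedes it below -/
import Mathlib

section
/- Let n ≥ 2 be even with k = n/2 odd, let N ≥ 2, set ω = exp(2πi/n), and let η_1, …, η_{2N} be elements of an associative unital ℂ-algebra, indexed cyclically mod 2N, satisfying η_j η_{j+1} = ω η_{j+1} η_j for all j, η_j η_k = η_k η_j whenever k ≢ j±1 (mod 2N), and η_j^n = 1 for all j. Define A₀ = Σ_{j=1}^{N} η_{2j−1}^k and A₁ = Σ_{j=1}^{N} η_{2j}^k. Then A₀ and A₁ satisfy the Dolan–Grady condition with constant C = 16, i.e. [A₀,[A₀,[A₀,A₁]]] = 16·[A₀,A₁] and [A₁,[A₁,[A₁,A₀]]] = 16·[A₁,A₀]. -/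
/-!
Because `k` is odd and `ω ^ k = -1`, the elements `a j = η j ^ k` are involutions that
anticommute with their two neighbours and commute with every other `a l`. For `X = A₀` and a
site `x = a ℓ` of `A₁`, only the neighbours `u = a (ℓ - 1)`, `v = a (ℓ + 1)` contribute to
`⁅X, x⁆`, which is therefore `s * x` with `s = 2 (u + v)` commuting with `X`. Hence
`ad X ^ 3` sends `x` to `s ^ 3 * x`, and `s ^ 3 = 16 s` since `(u + v) ^ 3 = 4 (u + v)` for
commuting involutions. The roles of `A₀` and `A₁` are symmetric.
-/

open Finset

section Algebra

variable {A : Type*} [Ring A]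

theorem lie_mul_of_commute {X s : A} (hXs : Commute X s) (y : A) : ⁅X, s * y⁆ = s * ⁅X, y⁆ := by
  rw [Ring.lie_def, Ring.lie_def, mul_sub, ← mul_assoc, hXs.eq, mul_assoc, mul_assoc]

theorem lie_lie_lie_eq_pow_three_mul {X s x : A} (hXs : Commute X s) (h : ⁅X, x⁆ = s * x) :
    ⁅X, ⁅X, ⁅X, x⁆⁆⁆ = s ^ 3 * x := by
  rw [h, lie_mul_of_commute hXs, h, lie_mul_of_commute hXs, lie_mul_of_commute hXs, h]
  noncomm_ring

theorem add_pow_three_of_mul_self_eq_one {u v : A} (huv : Commute u v) (hu : u * u = 1)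
    (hv : v * v = 1) : (u + v) ^ 3 = 4 * (u + v) := by
  have hvuv : v * u * v = u := by rw [← huv.eq, mul_assoc, hv, mul_one]
  have huvu : u * v * u = v := by rw [huv.eq, mul_assoc, hu, mul_one]
  calc (u + v) ^ 3 = u * u * u + u * u * v + u * v * u + u * (v * v)
        + (v * (u * u) + v * u * v + v * v * u + v * v * v) := by noncomm_ring
    _ = 4 * (u + v) := by
        rw [hu, hv, huvu, hvuv]
        noncomm_ring

theorem lie_eq_two_mul_of_mul_eq_neg {u x : A} (h : u * x = -(x * u)) : ⁅u, x⁆ = 2 * (u * x) := by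
  rw [Ring.lie_def, h]
  noncomm_ring

theorem lie_lie_lie_eq_sixteen_mul {X u v x : A} (hXu : Commute X u) (hXv : Commute X v)
    (huv : Commute u v) (hu : u * u = 1) (hv : v * v = 1) (hux : u * x = -(x * u))
    (hvx : v * x = -(x * v)) (hX : ⁅X, x⁆ = ⁅u, x⁆ + ⁅v, x⁆) :
    ⁅X, ⁅X, ⁅X, x⁆⁆⁆ = 16 * ⁅X, x⁆ := by
  have hs : ⁅X, x⁆ = 2 * (u + v) * x := by
    rw [hX, lie_eq_two_mul_of_mul_eq_neg hux, lie_eq_two_mul_of_mul_eq_neg hvx]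
    noncomm_ring
  have hXs : Commute X (2 * (u + v)) := (Commute.ofNat_right X 2).mul_right (hXu.add_right hXv)
  rw [lie_lie_lie_eq_pow_three_mul hXs hs, (Commute.ofNat_left 2 (u + v)).mul_pow,
    add_pow_three_of_mul_self_eq_one huv hu hv, hs]
  noncomm_ring

end Algebra

section Swap

variable {R A : Type*} [CommRing R] [Ring A] [Algebra R A]

theorem pow_mul_eq_smul_of_mul_eq_smul {ω : R} {x y : A} (h : x * y = ω • (y * x)) (p : ℕ) :
    x ^ p * y = ω ^ p • (y * x ^ p) := by
  induction p with
  | zero => simp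
  | succ p ih =>
      rw [pow_succ, mul_assoc, h, mul_smul_comm, ← mul_assoc, ih, smul_mul_assoc,
        smul_smul, mul_assoc, pow_succ, ← mul_assoc y, mul_comm (ω ^ p) ω]

theorem pow_mul_pow_eq_smul_of_mul_eq_smul {ω : R} {x y : A} (h : x * y = ω • (y * x))
    (p q : ℕ) : x ^ p * y ^ q = ω ^ (p * q) • (y ^ q * x ^ p) := by
  induction q with
  | zero => simp
  | succ q ih =>
      rw [pow_succ, ← mul_assoc, ih, smul_mul_assoc, mul_assoc,
        pow_mul_eq_smul_of_mul_eq_smul h p, mul_smul_comm, smul_smul, ← pow_add, ← mul_assoc]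
      ring_nf

end Swap

section ZMod

variable {N : ℕ}

theorem ZMod.two_mul_natCast_eq_two_mul_natCast_iff {a b : ℕ} :
    2 * (a : ZMod (2 * N)) = 2 * b ↔ a ≡ b [MOD N] := by
  rw [← Nat.ModEq.mul_left_cancel_iff' two_ne_zero, ← ZMod.natCast_eq_natCast_iff]
  push_cast
  rfl

theorem ZMod.exists_lt_two_mul_natCast_eq [NeZero N] (z : ZMod (2 * N)) :
    ∃ j < N, 2 * (j : ZMod (2 * N)) = 2 * z :=
  ⟨z.val % N, Nat.mod_lt _ (NeZero.pos N), by
    rw [ZMod.two_mul_natCast_eq_two_mul_natCast_iff.mpr (Nat.mod_modEq _ _), ZMod.natCast_zmod_val]⟩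

theorem ZMod.two_mul_ne_one (z : ZMod (2 * N)) : 2 * z ≠ 1 := by
  intro h
  have h2 := congrArg (ZMod.castHom (dvd_mul_right 2 N) (ZMod 2)) h
  rw [map_mul, map_ofNat, map_one] at h2
  have hZMod2 : ∀ w : ZMod 2, 2 * w ≠ 1 := by decide
  exact hZMod2 _ h2

theorem ZMod.two_ne_zero_of_two_le (hN : 2 ≤ N) : (2 : ZMod (2 * N)) ≠ 0 := by
  have h : ((2 : ℕ) : ZMod (2 * N)) ≠ 0 := by
    rw [Ne, ZMod.natCast_eq_zero_iff]
    intro hdvd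
    have := Nat.le_of_dvd two_pos hdvd
    omega
  exact_mod_cast h

end ZMod

structure IsAnticommutingChain {A : Type*} [Ring A] {m : ℕ} (a : ZMod m → A) : Prop where
  mul_self : ∀ j, a j * a j = 1
  mul_succ : ∀ j, a j * a (j + 1) = -(a (j + 1) * a j)
  commute : ∀ j l, l ≠ j + 1 → l ≠ j - 1 → Commute (a j) (a l)

theorem isAnticommutingChain_pow {R A : Type*} [CommRing R] [Ring A] [Algebra R A] {m k : ℕ}
    {ω : R} (hω : ω ^ (k * k) = -1) {η : ZMod m → A}
    (hanti : ∀ j, η j * η (j + 1) = ω • (η (j + 1) * η j))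
    (hcomm : ∀ j l, l ≠ j + 1 → l ≠ j - 1 → η j * η l = η l * η j)
    (hpow : ∀ j, η j ^ (2 * k) = 1) :
    IsAnticommutingChain (fun j => η j ^ k) where
  mul_self j := by rw [← pow_add, ← two_mul, hpow]
  mul_succ j := by rw [pow_mul_pow_eq_smul_of_mul_eq_smul (hanti j), hω, neg_one_smul]
  commute j l h₁ h₂ := Commute.pow_pow (hcomm j l h₁ h₂) k k

namespace IsAnticommutingChain

attribute [local instance] LieRing.ofAssociativeRing

variable {A : Type*} [Ring A] {N : ℕ} {a : ZMod (2 * N) → A}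

theorem commute_two_mul_add (ha : IsAnticommutingChain a) (c w w' : ZMod (2 * N)) :
    Commute (a (2 * w + c)) (a (2 * w' + c)) :=
  ha.commute _ _ (fun h => ZMod.two_mul_ne_one (w' - w) (by linear_combination h))
    (fun h => ZMod.two_mul_ne_one (w - w') (by linear_combination -h))

theorem commute_sum_two_mul_add (ha : IsAnticommutingChain a) (c w : ZMod (2 * N)) :
    Commute (∑ j ∈ range N, a (2 * (j : ZMod (2 * N)) + c)) (a (2 * w + c)) :=
  Commute.sum_left _ _ _ fun j _ => ha.commute_two_mul_add c j w

theorem lie_sum_two_mul_add (ha : IsAnticommutingChain a) (hN : 2 ≤ N) (c z : ZMod (2 * N)) :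
    ⁅∑ j ∈ range N, a (2 * (j : ZMod (2 * N)) + c), a (2 * z + c + 1)⁆ =
      ⁅a (2 * z + c), a (2 * z + c + 1)⁆ + ⁅a (2 * (z + 1) + c), a (2 * z + c + 1)⁆ := by
  have : NeZero N := ⟨by omega⟩
  obtain ⟨p, hp, hpz⟩ := ZMod.exists_lt_two_mul_natCast_eq z
  obtain ⟨q, hq, hqz⟩ := ZMod.exists_lt_two_mul_natCast_eq (z + 1)
  have hinj : ∀ i j : ℕ, i < N → j < N → 2 * (i : ZMod (2 * N)) = 2 * j → i = j :=
    fun i j hi hj h => by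
      simpa [Nat.ModEq, Nat.mod_eq_of_lt hi, Nat.mod_eq_of_lt hj] using
        ZMod.two_mul_natCast_eq_two_mul_natCast_iff.mp h
  have hpq : p ≠ q := by
    rintro rfl
    exact ZMod.two_ne_zero_of_two_le hN (by linear_combination hpz - hqz)
  rw [sum_lie, sum_eq_add_of_mem p q (mem_range.mpr hp) (mem_range.mpr hq) hpq, hpz, hqz]
  rintro j hj ⟨hjp, hjq⟩
  refine (ha.commute _ _ (fun h => hjp ?_) (fun h => hjq ?_)).lie_eq
  · exact hinj j p (mem_range.mp hj) hp (by linear_combination -h - hpz)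
  · exact hinj j q (mem_range.mp hj) hq (by linear_combination -h - hqz)

theorem lie_lie_lie_sum_two_mul_add (ha : IsAnticommutingChain a) (hN : 2 ≤ N)
    (c z : ZMod (2 * N)) :
    let X := ∑ j ∈ range N, a (2 * (j : ZMod (2 * N)) + c)
    ⁅X, ⁅X, ⁅X, a (2 * z + c + 1)⁆⁆⁆ = 16 * ⁅X, a (2 * z + c + 1)⁆ := by
  refine lie_lie_lie_eq_sixteen_mul (ha.commute_sum_two_mul_add c z)
    (ha.commute_sum_two_mul_add c (z + 1)) (ha.commute_two_mul_add c z (z + 1)) (ha.mul_self _)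
    (ha.mul_self _) (ha.mul_succ _) ?_ (ha.lie_sum_two_mul_add hN c z)
  have h := ha.mul_succ (2 * z + c + 1)
  rw [show 2 * z + c + 1 + 1 = 2 * (z + 1) + c by ring] at h
  rw [h, neg_neg]

theorem lie_lie_lie_sum_eq_sixteen_smul {R : Type*} [CommSemiring R] [Algebra R A]
    (ha : IsAnticommutingChain a) (hN : 2 ≤ N) (c : ZMod (2 * N)) {ι : Type*} (s : Finset ι)
    (ℓ : ι → ZMod (2 * N)) (hℓ : ∀ i ∈ s, ∃ z, ℓ i = 2 * z + c + 1) :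
    let X := ∑ j ∈ range N, a (2 * (j : ZMod (2 * N)) + c)
    let Y := ∑ i ∈ s, a (ℓ i)
    ⁅X, ⁅X, ⁅X, Y⁆⁆⁆ = (16 : R) • ⁅X, Y⁆ := by
  simp only [lie_sum, smul_sum]
  refine sum_congr rfl fun i hi => ?_
  obtain ⟨z, hz⟩ := hℓ i hi
  rw [hz, ha.lie_lie_lie_sum_two_mul_add hN c z, ← map_ofNat (algebraMap R A), ← Algebra.smul_def]

end IsAnticommutingChain

theorem Complex.exp_two_pi_mul_I_div_two_mul_pow {k : ℕ} (hk : k ≠ 0) :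
    Complex.exp (2 * Real.pi * Complex.I / (2 * k : ℕ)) ^ k = -1 := by
  have h := (Complex.isPrimitiveRoot_exp (2 * k) (by omega)).pow_of_dvd hk (dvd_mul_left k 2)
  rw [Nat.mul_div_cancel _ (Nat.pos_of_ne_zero hk)] at h
  exact h.eq_neg_one_of_two_right

open Complex in
theorem dolan_grady_clock_half_odd_general
    (n k : ℕ) (hk : n = 2 * k) (hkodd : Odd k)
    (N : ℕ) (hN : 2 ≤ N) (A : Type*) [Ring A] [Algebra ℂ A]
    (ω : ℂ) (hω : ω = Complex.exp (2 * Real.pi * Complex.I / n))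
    (η : ZMod (2 * N) → A)
    (hanti : ∀ j : ZMod (2 * N), η j * η (j + 1) = ω • (η (j + 1) * η j))
    (hcomm : ∀ j l : ZMod (2 * N), l ≠ j + 1 → l ≠ j - 1 → η j * η l = η l * η j)
    (hpow : ∀ j : ZMod (2 * N), η j ^ n = 1)
    (A₀ A₁ : A)
    (hA₀ : A₀ = ∑ j ∈ Finset.range N, η (2 * (j : ZMod (2 * N)) + 1) ^ k)
    (hA₁ : A₁ = ∑ j ∈ Finset.range N, η (2 * (j : ZMod (2 * N)) + 2) ^ k) :
    ⁅A₀, ⁅A₀, ⁅A₀, A₁⁆⁆⁆ = (16 : ℂ) • ⁅A₀, A₁⁆ ∧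
    ⁅A₁, ⁅A₁, ⁅A₁, A₀⁆⁆⁆ = (16 : ℂ) • ⁅A₁, A₀⁆ := by
  subst hk hω hA₀ hA₁
  have hωk : Complex.exp (2 * Real.pi * Complex.I / (2 * k : ℕ)) ^ (k * k) = -1 := by
    rw [pow_mul, Complex.exp_two_pi_mul_I_div_two_mul_pow hkodd.pos.ne', hkodd.neg_one_pow]
  have ha := isAnticommutingChain_pow hωk hanti hcomm hpow
  exact ⟨ha.lie_lie_lie_sum_eq_sixteen_smul hN 1 _ _ fun i _ => ⟨i, by ring⟩,
    ha.lie_lie_lie_sum_eq_sixteen_smul hN 2 _ _ fun i _ => ⟨i - 1, by ring⟩⟩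

open Complex in
/-- Corollary 1 of the paper, case `n/2` odd.
Let `n ≥ 2` be even with `k = n/2` odd, `ω = exp(2πi/n)`, and let `η_j`
(indexed cyclically mod `2N`, `N ≥ 2`) satisfy `η_j η_{j+1} = ω η_{j+1} η_j`,
`η_j η_k = η_k η_j` for `k ≢ j ± 1 (mod 2N)`, and `η_j^n = 1`.
Then `A₀ = Σ η_{2j−1}^k` and `A₁ = Σ η_{2j}^k` satisfy the Dolan–Grady condition
with constant `C = 16`. -/
theorem dolan_grady_clock_half_odd
    (n k : ℕ) (hn : 2 ≤ n) (hk : n = 2 * k) (hkodd : Odd k)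
    (N : ℕ) (hN : 2 ≤ N) (A : Type*) [Ring A] [Algebra ℂ A]
    (ω : ℂ) (hω : ω = Complex.exp (2 * Real.pi * Complex.I / n))
    (η : ZMod (2 * N) → A)
    (hanti : ∀ j : ZMod (2 * N), η j * η (j + 1) = ω • (η (j + 1) * η j))
    (hcomm : ∀ j l : ZMod (2 * N), l ≠ j + 1 → l ≠ j - 1 → η j * η l = η l * η j)
    (hpow : ∀ j : ZMod (2 * N), η j ^ n = 1)
    (A₀ A₁ : A)
    (hA₀ : A₀ = ∑ j ∈ Finset.range N, η (2 * (j : ZMod (2 * N)) + 1) ^ k)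
    (hA₁ : A₁ = ∑ j ∈ Finset.range N, η (2 * (j : ZMod (2 * N)) + 2) ^ k) :
    ⁅A₀, ⁅A₀, ⁅A₀, A₁⁆⁆⁆ = (16 : ℂ) • ⁅A₀, A₁⁆ ∧
    ⁅A₁, ⁅A₁, ⁅A₁, A₀⁆⁆⁆ = (16 : ℂ) • ⁅A₁, A₀⁆ :=
  dolan_grady_clock_half_odd_general n k hk hkodd N hN A ω hω η hanti hcomm hpow A₀ A₁ hA₀ hA₁
end

section
/- Let n ≥ 2 be even with k = n/2 odd, let N ≥ 2, set ω = exp(2πi/n), and let η_1, …, η_{2N} be elements of an associative unital ℂ-algebra, indexed cyclically mod 2N, satisfying η_j η_{j+1} = ω^{ε_j} η_{j+1} η_j for all j, where each ε_j ∈ {+1, −1} may depend on j, together with η_j η_k = η_k η_j whenever k ≢ j±1 (mod 2N), and η_j^n = 1 for all j. Then A₀ = Σ_{j=1}^{N} η_{2j−1}^k and A₁ = Σ_{j=1}^{N} η_{2j}^k satisfy the Dolan–Grady condition with constant C = 16, i.e. [A₀,[A₀,[A₀,A₁]]] = 16·[A₀,A₁] and [A₁,[A₁,[A₁,A₀]]]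 = 16·[A₁,A₀]. -/
/-!
Put `b j = η j ^ k`. Then `b j * b j = 1`, neighbouring `b`'s anticommute because
`ω ^ (± k * k) = -1` for odd `k`, and all other pairs commute. Sites of equal parity commute, and
a site `y` of the other parity anticommutes with exactly the two sites `y ± 1` of `A₀`'s parity
(distinct as `N ≥ 2`), commuting with the rest. With `s = b (y - 1) + b (y + 1)`, `ad A₀` therefore
acts on `s ^ m * b y` as left multiplication by `2 s`, and `s ^ 3 = 4 s` turns
`(ad A₀) ^ 3 (b y) = 8 s ^ 3 b y` into `16 • ad A₀ (b y)`. Summing over `y` gives the first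
identity; the second is the same argument with the parities exchanged.
-/

open Finset

section PowerCommutation

variable {R A : Type*} [CommSemiring R] [Semiring A] [Algebra R A] {c : R} {x y : A}

theorem mul_pow_eq_smul_of_mul_eq_smul (h : x * y = c • (y * x)) (l : ℕ) :
    x * y ^ l = c ^ l • (y ^ l * x) := by
  induction l with
  | zero => simp
  | succ l ih =>
    rw [pow_succ, ← mul_assoc, ih, smul_mul_assoc, mul_assoc, h, mul_smul_comm, smul_smul,
      pow_succ, ← mul_assoc]

theorem pow_mul_pow_eq_smul_of_mul_eq_smul_s17 (h : x * y = c • (y * x)) (m l : ℕ) :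
    x ^ m * y ^ l = c ^ (m * l) • (y ^ l * x ^ m) := by
  induction m with
  | zero => simp
  | succ m ih =>
    rw [pow_succ, mul_assoc, mul_pow_eq_smul_of_mul_eq_smul h l, mul_smul_comm, ← mul_assoc, ih,
      smul_mul_assoc, smul_smul, ← pow_add, mul_assoc, ← pow_succ, add_one_mul, add_comm]

end PowerCommutation

theorem IsPrimitiveRoot.zpow_pow_mul_self_eq_neg_one {R : Type*} [Field R]
    {ζ : R} {n k : ℕ} (hζ : IsPrimitiveRoot ζ n) (hk : n = 2 * k) (hkodd : Odd k) {e : ℤ}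
    (he : e = 1 ∨ e = -1) : (ζ ^ e) ^ (k * k) = -1 := by
  have hζk : ζ ^ k = -1 :=
    (hζ.pow (by have := hkodd.pos; omega) (by rw [hk, mul_comm])).eq_neg_one_of_two_right
  have hsq : ζ ^ (k * k) = -1 := by rw [pow_mul, hζk, hkodd.neg_one_pow]
  rcases he with rfl | rfl
  · rw [zpow_one, hsq]
  · rw [zpow_neg_one, inv_pow, hsq, inv_neg, inv_one]

section Anticommutation

attribute [local instance] LieRing.ofAssociativeRing

variable {A : Type*} [Ring A] {s r a : A}

theorem lie_add_pow_mul_of_mul_eq_neg (hsa : s * a = -(a * s)) (hrs : Commute r s)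
    (hra : Commute r a) (m : ℕ) : ⁅s + r, s ^ m * a⁆ = 2 • (s ^ (m + 1) * a) := by
  have hr : ⁅r, s ^ m * a⁆ = 0 := by
    rw [Ring.lie_def, sub_eq_zero]; exact ((hrs.pow_right m).mul_right hra).eq
  have has : a * s = -(s * a) := by rw [hsa, neg_neg]
  have hleft : s * (s ^ m * a) = s ^ (m + 1) * a := by rw [← mul_assoc, ← pow_succ']
  have hright : s ^ m * a * s = -(s ^ (m + 1) * a) := by
    rw [mul_assoc, has, mul_neg, ← mul_assoc, ← pow_succ]
  rw [add_lie, hr, add_zero, Ring.lie_def, hleft, hright, sub_neg_eq_add, two_nsmul]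

theorem lie_lie_lie_add_of_mul_eq_neg (hsa : s * a = -(a * s)) (hrs : Commute r s)
    (hra : Commute r a) {c : ℕ} (hs : s ^ 3 = c • s) :
    ⁅s + r, ⁅s + r, ⁅s + r, a⁆⁆⁆ = (4 * c) • ⁅s + r, a⁆ := by
  have h := lie_add_pow_mul_of_mul_eq_neg hsa hrs hra
  have h₀ : ⁅s + r, a⁆ = 2 • (s * a) := by simpa using h 0
  have h₁ : ⁅s + r, s * a⁆ = 2 • (s ^ 2 * a) := by simpa using h 1
  rw [h₀, lie_nsmul, h₁, lie_nsmul, lie_nsmul, h 2, hs, smul_mul_assoc]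
  simp only [smul_smul]
  ring_nf

theorem add_pow_three_of_mul_self_eq_one_s17 {p q : A} (hp : p * p = 1) (hq : q * q = 1)
    (hpq : Commute p q) : (p + q) ^ 3 = 4 • (p + q) := by
  have hppq : p * (p * q) = q := by rw [← mul_assoc, hp, one_mul]
  simp only [pow_succ, pow_zero, one_mul, add_mul, mul_add, hp, hq, mul_one, hpq.eq.symm,
    mul_assoc, hppq]
  abel

structure IsInvolutionChain {ι A : Type*} [Ring ι] [Ring A] (b : ι → A) : Prop where
  mul_self : ∀ j, b j * b j = 1
  anticommute_add_one : ∀ j, b j * b (j + 1) = -(b (j + 1) * b j)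
  commute : ∀ j l, l ≠ j + 1 → l ≠ j - 1 → Commute (b j) (b l)

namespace IsInvolutionChain

variable {ι : Type*} [Ring ι] {b : ι → A}

theorem commute_of_even_sub (hb : IsInvolutionChain b) (hone : ¬Even (1 : ι)) {x x' : ι}
    (h : Even (x' - x)) : Commute (b x) (b x') := by
  refine hb.commute x x' (fun hx => hone ?_) (fun hx => hone ?_)
  · rwa [hx, add_sub_cancel_left] at h
  · rwa [hx, sub_sub_cancel_left, even_neg] at h

theorem lie_lie_lie_sum [DecidableEq ι] (hb : IsInvolutionChain b) (hone : ¬Even (1 : ι))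
    (htwo : (2 : ι) ≠ 0) {T : Finset ι} (hT : ∀ x ∈ T, ∀ x' ∈ T, Even (x' - x)) {y : ι}
    (hy : y - 1 ∈ T ∧ y + 1 ∈ T) :
    ⁅∑ x ∈ T, b x, ⁅∑ x ∈ T, b x, ⁅∑ x ∈ T, b x, b y⁆⁆⁆ = 16 • ⁅∑ x ∈ T, b x, b y⁆ := by
  obtain ⟨hy₁, hy₂⟩ := hy
  have hne : y + 1 ≠ y - 1 := fun h =>
    htwo (by rw [← one_add_one_eq_two, ← add_sub_sub_cancel y, h, sub_self])
  set R := ∑ x ∈ (T.erase (y - 1)).erase (y + 1), b x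
  have hsplit : ∑ x ∈ T, b x = b (y - 1) + b (y + 1) + R := by
    rw [← add_sum_erase T b hy₁, ← add_sum_erase _ b (mem_erase.2 ⟨hne, hy₂⟩), add_assoc]
  have hcomm : ∀ x ∈ T, ∀ x' ∈ T, Commute (b x) (b x') := fun x hx x' hx' =>
    hb.commute_of_even_sub hone (hT x hx x' hx')
  have hRs : Commute R (b (y - 1) + b (y + 1)) := by
    refine Commute.sum_left _ _ _ fun x hx => ?_
    have hxT := mem_of_mem_erase (mem_of_mem_erase hx)
    exact (hcomm x hxT _ hy₁).add_right (hcomm x hxT _ hy₂)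
  have hRa : Commute R (b y) := by
    refine Commute.sum_left _ _ _ fun x hx => ?_
    simp only [mem_erase] at hx
    exact (hb.commute y x hx.1 hx.2.1).symm
  have hsa : (b (y - 1) + b (y + 1)) * b y = -(b y * (b (y - 1) + b (y + 1))) := by
    have h₁ := hb.anticommute_add_one (y - 1)
    have h₂ := hb.anticommute_add_one y
    rw [sub_add_cancel] at h₁
    rw [add_mul, mul_add, h₁, ← neg_neg (b (y + 1) * b y), ← h₂, neg_add]
  rw [hsplit, lie_lie_lie_add_of_mul_eq_neg hsa hRs hRa (add_pow_three_of_mul_self_eq_one_s17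
    (hb.mul_self _) (hb.mul_self _) (hcomm _ hy₁ _ hy₂))]

theorem lie_lie_lie_sum_sum [DecidableEq ι] (hb : IsInvolutionChain b) (hone : ¬Even (1 : ι))
    (htwo : (2 : ι) ≠ 0) {T T' : Finset ι} (hT : ∀ x ∈ T, ∀ x' ∈ T, Even (x' - x))
    (hT' : ∀ y ∈ T', y - 1 ∈ T ∧ y + 1 ∈ T) :
    ⁅∑ x ∈ T, b x, ⁅∑ x ∈ T, b x, ⁅∑ x ∈ T, b x, ∑ y ∈ T', b y⁆⁆⁆ =
      16 • ⁅∑ x ∈ T, b x, ∑ y ∈ T', b y⁆ := by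
  simp only [lie_sum, smul_sum]
  exact sum_congr rfl fun y hy => hb.lie_lie_lie_sum hone htwo hT (hT' y hy)

end IsInvolutionChain

end Anticommutation

section Cosets

variable {ι : Type*} [Ring ι] [Fintype ι] [DecidableEq ι]

theorem even_sub_of_mem_image_two_mul_add {c x x' : ι}
    (hx : x ∈ univ.image (fun m => 2 * m + c)) (hx' : x' ∈ univ.image (fun m => 2 * m + c)) :
    Even (x' - x) := by
  obtain ⟨m, -, rfl⟩ := mem_image.1 hx
  obtain ⟨m', -, rfl⟩ := mem_image.1 hx'
  exact ⟨m' - m, by noncomm_ring⟩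

theorem sub_one_mem_and_add_one_mem_image_two_mul_add {c d y : ι} (hcd : Odd (d - c))
    (hy : y ∈ univ.image (fun m => 2 * m + d)) :
    y - 1 ∈ univ.image (fun m => 2 * m + c) ∧ y + 1 ∈ univ.image (fun m => 2 * m + c) := by
  obtain ⟨r, hr⟩ := hcd
  obtain ⟨m, -, rfl⟩ := mem_image.1 hy
  rw [eq_add_of_sub_eq hr]
  exact ⟨mem_image.2 ⟨m + r, mem_univ _, by noncomm_ring⟩,
    mem_image.2 ⟨m + r + 1, mem_univ _, by noncomm_ring⟩⟩

end Cosets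

namespace ZMod

theorem not_even_one_of_two_mul (N : ℕ) : ¬Even (1 : ZMod (2 * N)) := fun h => by
  obtain ⟨r, hr⟩ := h.map (ZMod.castHom (dvd_mul_right 2 N) (ZMod 2))
  rw [map_one] at hr
  fin_cases r <;> exact absurd hr (by decide)

theorem two_ne_zero_of_two_le_s17 {N : ℕ} (hN : 2 ≤ N) : (2 : ZMod (2 * N)) ≠ 0 := fun h => by
  have := Nat.le_of_dvd two_pos ((ZMod.natCast_eq_zero_iff 2 (2 * N)).1 (by exact_mod_cast h))
  omega

theorem two_mul_natCast_mod (N m : ℕ) :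
    2 * ((m % N : ℕ) : ZMod (2 * N)) = 2 * (m : ZMod (2 * N)) := by
  have h2N : ((2 * N : ℕ) : ZMod (2 * N)) = 0 := ZMod.natCast_self _
  conv_rhs => rw [← Nat.mod_add_div m N]
  push_cast at h2N ⊢
  linear_combination (-((m / N : ℕ) : ZMod (2 * N))) * h2N

theorem sum_range_two_mul_add {N : ℕ} [NeZero N] {M : Type*} [AddCommMonoid M]
    (f : ZMod (2 * N) → M) (c : ZMod (2 * N)) :
    ∑ j ∈ range N, f (2 * j + c) = ∑ x ∈ univ.image (fun m => 2 * m + c), f x := by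
  refine sum_nbij (fun j => 2 * (j : ZMod (2 * N)) + c)
    (fun j _ => mem_image_of_mem _ (mem_univ _)) (fun i hi j hj hij => ?_) (fun x hx => ?_)
    (fun _ _ => rfl)
  · have hi' := mem_range.1 hi
    have hj' := mem_range.1 hj
    have h : ((2 * i : ℕ) : ZMod (2 * N)) = ((2 * j : ℕ) : ZMod (2 * N)) := by
      push_cast; exact add_right_cancel hij
    rw [ZMod.natCast_eq_natCast_iff', Nat.mod_eq_of_lt (by omega),
      Nat.mod_eq_of_lt (by omega)] at h
    omega
  · obtain ⟨m, -, rfl⟩ := mem_image.1 hx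
    refine ⟨m.val % N, mem_range.2 (Nat.mod_lt _ (NeZero.pos N)), ?_⟩
    simp only [two_mul_natCast_mod, ZMod.natCast_zmod_val]

end ZMod

theorem IsInvolutionChain.lie_lie_lie_sum_image_two_mul_add {A : Type*} [Ring A] {N : ℕ}
    [NeZero N] (hN : 2 ≤ N) {b : ZMod (2 * N) → A} (hb : IsInvolutionChain b)
    {c d : ZMod (2 * N)} (hcd : Odd (d - c)) :
    ⁅∑ x ∈ univ.image (fun m => 2 * m + c), b x, ⁅∑ x ∈ univ.image (fun m => 2 * m + c), b x,
      ⁅∑ x ∈ univ.image (fun m => 2 * m + c), b x, ∑ y ∈ univ.image (fun m => 2 * m + d), b y⁆⁆⁆ =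
    16 • ⁅∑ x ∈ univ.image (fun m => 2 * m + c), b x, ∑ y ∈ univ.image (fun m => 2 * m + d), b y⁆ :=
  hb.lie_lie_lie_sum_sum (ZMod.not_even_one_of_two_mul N) (ZMod.two_ne_zero_of_two_le_s17 hN)
    (fun _ hx _ hx' => even_sub_of_mem_image_two_mul_add hx hx')
    (fun _ hy => sub_one_mem_and_add_one_mem_image_two_mul_add hcd hy)

theorem dolan_grady_clock_half_odd_site_dependent_signs_general
    (n k : ℕ) (hk : n = 2 * k) (hkodd : Odd k)
    (N : ℕ) (hN : 2 ≤ N) (A : Type*) [Ring A] [Algebra ℂ A]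
    (ω : ℂ) (hω : ω = Complex.exp (2 * Real.pi * Complex.I / n))
    (ε : ZMod (2 * N) → ℤ) (hε : ∀ j : ZMod (2 * N), ε j = 1 ∨ ε j = -1)
    (η : ZMod (2 * N) → A)
    (hanti : ∀ j : ZMod (2 * N), η j * η (j + 1) = ω ^ (ε j) • (η (j + 1) * η j))
    (hcomm : ∀ j l : ZMod (2 * N), l ≠ j + 1 → l ≠ j - 1 → η j * η l = η l * η j)
    (hpow : ∀ j : ZMod (2 * N), η j ^ n = 1)
    (A₀ A₁ : A)
    (hA₀ : A₀ = ∑ j ∈ Finset.range N, η (2 * (j : ZMod (2 * N)) + 1) ^ k)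
    (hA₁ : A₁ = ∑ j ∈ Finset.range N, η (2 * (j : ZMod (2 * N)) + 2) ^ k) :
    ⁅A₀, ⁅A₀, ⁅A₀, A₁⁆⁆⁆ = (16 : ℂ) • ⁅A₀, A₁⁆ ∧
    ⁅A₁, ⁅A₁, ⁅A₁, A₀⁆⁆⁆ = (16 : ℂ) • ⁅A₁, A₀⁆ := by
  have : NeZero N := ⟨by omega⟩
  have hζ : IsPrimitiveRoot ω n := hω ▸ Complex.isPrimitiveRoot_exp n (by grind)
  have hb : IsInvolutionChain fun j => η j ^ k :=
    { mul_self := fun j => by rw [← pow_add, ← two_mul, ← hk, hpow]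
      anticommute_add_one := fun j => by
        rw [pow_mul_pow_eq_smul_of_mul_eq_smul_s17 (hanti j),
          hζ.zpow_pow_mul_self_eq_neg_one hk hkodd (hε j), neg_one_smul]
      commute := fun j l h₁ h₂ => Commute.pow_pow (hcomm j l h₁ h₂) k k }
  rw [hA₀.trans (ZMod.sum_range_two_mul_add (fun x => η x ^ k) 1),
    hA₁.trans (ZMod.sum_range_two_mul_add (fun x => η x ^ k) 2),
    ofNat_smul_eq_nsmul ℂ, ofNat_smul_eq_nsmul ℂ]
  exact ⟨hb.lie_lie_lie_sum_image_two_mul_add hN (by norm_num),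
    hb.lie_lie_lie_sum_image_two_mul_add hN (by norm_num)⟩

/-- remark after Corollary 1 of the paper: site-dependent
signs `ω^{±1}` are allowed.  Let `n ≥ 2` be even with `k = n/2` odd,
`ω = exp(2πi/n)`, and let `η_j` (indexed cyclically mod `2N`, `N ≥ 2`) satisfy
`η_j η_{j+1} = ω^{ε_j} η_{j+1} η_j` with `ε_j ∈ {+1, −1}`, together with
`η_j η_k = η_k η_j` for `k ≢ j ± 1 (mod 2N)`, and `η_j^n = 1`.  Then
`A₀ = Σ η_{2j−1}^k` and `A₁ = Σ η_{2j}^k` satisfy the Dolan–Grady condition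
with constant `C = 16`. -/
theorem dolan_grady_clock_half_odd_site_dependent_signs
    (n k : ℕ) (hn : 2 ≤ n) (hk : n = 2 * k) (hkodd : Odd k)
    (N : ℕ) (hN : 2 ≤ N) (A : Type*) [Ring A] [Algebra ℂ A]
    (ω : ℂ) (hω : ω = Complex.exp (2 * Real.pi * Complex.I / n))
    (ε : ZMod (2 * N) → ℤ) (hε : ∀ j : ZMod (2 * N), ε j = 1 ∨ ε j = -1)
    (η : ZMod (2 * N) → A)
    (hanti : ∀ j : ZMod (2 * N), η j * η (j + 1) = ω ^ (ε j) • (η (j + 1) * η j))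
    (hcomm : ∀ j l : ZMod (2 * N), l ≠ j + 1 → l ≠ j - 1 → η j * η l = η l * η j)
    (hpow : ∀ j : ZMod (2 * N), η j ^ n = 1)
    (A₀ A₁ : A)
    (hA₀ : A₀ = ∑ j ∈ Finset.range N, η (2 * (j : ZMod (2 * N)) + 1) ^ k)
    (hA₁ : A₁ = ∑ j ∈ Finset.range N, η (2 * (j : ZMod (2 * N)) + 2) ^ k) :
    ⁅A₀, ⁅A₀, ⁅A₀, A₁⁆⁆⁆ = (16 : ℂ) • ⁅A₀, A₁⁆ ∧
    ⁅A₁, ⁅A₁, ⁅A₁, A₀⁆⁆⁆ = (16 : ℂ) • ⁅A₁, A₀⁆ :=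
  dolan_grady_clock_half_odd_site_dependent_signs_general n k hk hkodd N hN A ω hω ε hε η hanti
    hcomm hpow A₀ A₁ hA₀ hA₁
end
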